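/- arXiv:2604.08215 — 2 statements merged into one kernel-verified Lean document; each statement's English description precedes it below -/
import Mathlib

section
/- Let p be a prime with p ≡ 7 (mod 12), say p = 12t+7. Then the disjoint union of C₅[K_{6t+3}] with 3t+1 copies of C₉[K_{6t+3}] has (1/8)(p-1)(9p-7) vertices and contains no induced regular subgraph of order exactly p. -/
/-- The induced subgraph of `G` on `s` is regular. -/
def RegOn {V : Type*} (G : SimpleGraph V) (s : Set V) : Prop :=
  ∃ d : ℕ, ∀ v ∈ s, (s ∩ {w | G.Adj v w}).ncard = d

/-- `G` has a regular induced subgraph of order exactly `k`. -/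
def HasRegEq {V : Type*} (G : SimpleGraph V) (k : ℕ) : Prop :=
  ∃ s : Set V, s.ncard = k ∧ RegOn G s

/-- The lexicographic product of the cycle `C_r` with the complete graph `K_s`. -/
def lexCycle (r s : ℕ) : SimpleGraph (ZMod r × Fin s) :=
  SimpleGraph.fromRel (fun a b => a.1 = b.1 ∨ a.1 = b.1 + 1)

/-- The disjoint union of `n` copies of the graph `H`. -/
def copies (n : ℕ) {V : Type*} (H : SimpleGraph V) : SimpleGraph (Fin n × V) :=
  SimpleGraph.fromRel (fun a b => a.1 = b.1 ∧ H.Adj a.2 b.2)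

/-- The disjoint union of two graphs. -/
def sumGraph {V W : Type*} (G : SimpleGraph V) (H : SimpleGraph W) :
    SimpleGraph (V ⊕ W) :=
  SimpleGraph.fromRel (fun a b =>
    (∃ x y, a = Sum.inl x ∧ b = Sum.inl y ∧ G.Adj x y) ∨
    (∃ x y, a = Sum.inr x ∧ b = Sum.inr y ∧ H.Adj x y))

lemma sumGraph_adj_ll {V W : Type*} (G : SimpleGraph V) (H : SimpleGraph W) (x y : V) :
    (sumGraph G H).Adj (Sum.inl x) (Sum.inl y) ↔ G.Adj x y := by
  simp only [sumGraph, SimpleGraph.fromRel_adj, ne_eq, Sum.inl.injEq, reduceCtorEq,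
    exists_and_left, exists_eq_left', exists_false, or_false, false_and, exists_and_right]
  constructor
  · rintro ⟨h1, h2 | h2⟩
    · exact h2
    · exact h2.symm
  · exact fun h => ⟨h.ne, Or.inl h⟩

lemma sumGraph_adj_rr {V W : Type*} (G : SimpleGraph V) (H : SimpleGraph W) (x y : W) :
    (sumGraph G H).Adj (Sum.inr x) (Sum.inr y) ↔ H.Adj x y := by
  simp only [sumGraph, SimpleGraph.fromRel_adj, ne_eq, Sum.inr.injEq, reduceCtorEq,
    exists_and_left, exists_eq_left', exists_false, or_false, false_and, false_or,
    exists_and_right]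
  constructor
  · rintro ⟨h1, h2 | h2⟩
    · exact h2
    · exact h2.symm
  · exact fun h => ⟨h.ne, Or.inl h⟩

lemma sumGraph_adj_lr {V W : Type*} (G : SimpleGraph V) (H : SimpleGraph W) (x : V) (y : W) :
    ¬ (sumGraph G H).Adj (Sum.inl x) (Sum.inr y) := by
  simp [sumGraph, SimpleGraph.fromRel_adj]

lemma sumGraph_adj_rl {V W : Type*} (G : SimpleGraph V) (H : SimpleGraph W) (x : W) (y : V) :
    ¬ (sumGraph G H).Adj (Sum.inr x) (Sum.inl y) := by
  simp [sumGraph, SimpleGraph.fromRel_adj]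

lemma copies_adj {n : ℕ} {V : Type*} (H : SimpleGraph V) (a b : Fin n × V) :
    (copies n H).Adj a b ↔ a.1 = b.1 ∧ H.Adj a.2 b.2 := by
  simp only [copies, SimpleGraph.fromRel_adj, ne_eq]
  constructor
  · rintro ⟨h1, ⟨h2, h3⟩ | ⟨h2, h3⟩⟩
    · exact ⟨h2, h3⟩
    · exact ⟨h2.symm, h3.symm⟩
  · rintro ⟨h1, h2⟩
    refine ⟨fun e => h2.ne ?_, Or.inl ⟨h1, h2⟩⟩
    rw [e]

lemma lexCycle_adj {r m : ℕ} (a b : ZMod r × Fin m) :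
    (lexCycle r m).Adj a b ↔ a ≠ b ∧ (b.1 = a.1 ∨ a.1 = b.1 + 1 ∨ b.1 = a.1 + 1) := by
  simp only [lexCycle, SimpleGraph.fromRel_adj, ne_eq]
  tauto

abbrev ColT (N : ℕ) := ZMod 5 ⊕ (Fin N × ZMod 9)

def colF {N m : ℕ} : ((ZMod 5 × Fin m) ⊕ (Fin N × ZMod 9 × Fin m)) → ColT N :=
  Sum.map Prod.fst (fun x => (x.1, x.2.1))

def predC {N : ℕ} : ColT N → ColT N := Sum.map (fun i => i - 1) (fun x => (x.1, x.2 - 1))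
def succC {N : ℕ} : ColT N → ColT N := Sum.map (fun i => i + 1) (fun x => (x.1, x.2 + 1))

lemma zmod_shift {r : ℕ} [NeZero r] (i j : ZMod r) : i = j + 1 ↔ j = i - 1 := by
  constructor <;> intro h <;> simp [h]

lemma adj_iff {N m : ℕ} (v w : (ZMod 5 × Fin m) ⊕ (Fin N × ZMod 9 × Fin m)) :
    (sumGraph (lexCycle 5 m) (copies N (lexCycle 9 m))).Adj v w ↔
      w ≠ v ∧ (colF w = predC (colF v) ∨ colF w = colF v ∨ colF w = succC (colF v)) := by
  rcases v with ⟨i, x⟩ | ⟨a, i, x⟩ <;> rcases w with ⟨j, y⟩ | ⟨b, j, y⟩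
  · rw [sumGraph_adj_ll, lexCycle_adj]
    simp only [colF, predC, succC, Sum.map_inl, Sum.inl.injEq, ne_eq, Sum.inl.injEq]
    rw [zmod_shift i j]
    constructor
    · rintro ⟨h1, h2⟩
      exact ⟨fun e => h1 e.symm, by tauto⟩
    · rintro ⟨h1, h2⟩
      exact ⟨fun e => h1 e.symm, by tauto⟩
  · rw [iff_false_intro (sumGraph_adj_lr _ _ _ _)]
    simp [colF, predC, succC]
  · rw [iff_false_intro (sumGraph_adj_rl _ _ _ _)]
    simp [colF, predC, succC]
  · rw [sumGraph_adj_rr, copies_adj, lexCycle_adj]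
    simp only [colF, predC, succC, Sum.map_inr, Sum.inr.injEq, ne_eq, Prod.mk.injEq,
      Prod.ext_iff]
    rw [zmod_shift i j]
    constructor
    · rintro ⟨hab, h1, h2⟩
      subst hab
      exact ⟨fun e => h1 ⟨e.2.1.symm, e.2.2.symm⟩, by tauto⟩
    · rintro ⟨h1, h2⟩
      have hb : b = a := by tauto
      subst hb
      exact ⟨rfl, fun e => h1 ⟨rfl, e.1.symm, e.2.symm⟩, by tauto⟩
lemma sum_ncard_fibers {V C : Type*} [Fintype V] [Fintype C] [DecidableEq C]
    (f : V → C) (s : Set V) : ∑ c, (s ∩ f ⁻¹' {c}).ncard = s.ncard := by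
  classical
  rw [Set.ncard_eq_toFinset_card s s.toFinite]
  rw [Finset.card_eq_sum_card_fiberwise (f := f) (t := Finset.univ)
    (fun x _ => Finset.mem_univ (f x))]
  refine Finset.sum_congr rfl (fun c _ => ?_)
  rw [Set.ncard_eq_toFinset_card _ (s ∩ f ⁻¹' {c}).toFinite]
  congr 1
  ext x
  simp [Set.Finite.mem_toFinset]

lemma ncard_union3 {V : Type*} [Fintype V] (A B C : Set V)
    (hAB : Disjoint A B) (hAC : Disjoint A C) (hBC : Disjoint B C) :
    (A ∪ B ∪ C).ncard = A.ncard + B.ncard + C.ncard := by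
  rw [Set.ncard_union_eq (by exact Disjoint.union_left hAC hBC) ((A ∪ B).toFinite) C.toFinite,
    Set.ncard_union_eq hAB A.toFinite B.toFinite]

lemma cyc5 (cap D : ℕ) (n : ZMod 5 → ℕ) (hc : ∀ i, n i ≤ cap)
    (h : ∀ i, 0 < n i → n (i - 1) + n i + n (i + 1) = D) :
    n 0 + n 1 + n 2 + n 3 + n 4 = 0 ∨
    (n 0 + n 1 + n 2 + n 3 + n 4 = D ∧ D ≤ 2 * cap) ∨
    n 0 + n 1 + n 2 + n 3 + n 4 = 2 * D ∨
    3 * (n 0 + n 1 + n 2 + n 3 + n 4) = 5 * D := by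
  have h0 := h 0; have h1 := h 1; have h2 := h 2; have h3 := h 3; have h4 := h 4
  have c0 := hc 0; have c1 := hc 1; have c2 := hc 2; have c3 := hc 3; have c4 := hc 4
  rw [show (0:ZMod 5) - 1 = 4 from by decide, show (0:ZMod 5) + 1 = 1 from by decide] at h0
  rw [show (1:ZMod 5) - 1 = 0 from by decide, show (1:ZMod 5) + 1 = 2 from by decide] at h1
  rw [show (2:ZMod 5) - 1 = 1 from by decide, show (2:ZMod 5) + 1 = 3 from by decide] at h2
  rw [show (3:ZMod 5) - 1 = 2 from by decide, show (3:ZMod 5) + 1 = 4 from by decide] at h3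
  rw [show (4:ZMod 5) - 1 = 3 from by decide, show (4:ZMod 5) + 1 = 0 from by decide] at h4
  omega

set_option maxHeartbeats 4000000 in
lemma cyc9 (cap D : ℕ) (n : ZMod 9 → ℕ) (hc : ∀ i, n i ≤ cap)
    (h : ∀ i, 0 < n i → n (i - 1) + n i + n (i + 1) = D) :
    n 0 + n 1 + n 2 + n 3 + n 4 + n 5 + n 6 + n 7 + n 8 = 0 ∨
    (n 0 + n 1 + n 2 + n 3 + n 4 + n 5 + n 6 + n 7 + n 8 = D ∧ D ≤ 2 * cap) ∨
    n 0 + n 1 + n 2 + n 3 + n 4 + n 5 + n 6 + n 7 + n 8 = 2 * D ∨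
    n 0 + n 1 + n 2 + n 3 + n 4 + n 5 + n 6 + n 7 + n 8 = 3 * D ∨
    n 0 + n 1 + n 2 + n 3 + n 4 + n 5 + n 6 + n 7 + n 8 = 4 * D := by
  have h0 := h 0; have h1 := h 1; have h2 := h 2; have h3 := h 3; have h4 := h 4
  have h5 := h 5; have h6 := h 6; have h7 := h 7; have h8 := h 8
  have c0 := hc 0; have c1 := hc 1; have c2 := hc 2; have c3 := hc 3; have c4 := hc 4
  have c5 := hc 5; have c6 := hc 6; have c7 := hc 7; have c8 := hc 8
  rw [show (0:ZMod 9) - 1 = 8 from by decide, show (0:ZMod 9) + 1 = 1 from by decide] at h0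
  rw [show (1:ZMod 9) - 1 = 0 from by decide, show (1:ZMod 9) + 1 = 2 from by decide] at h1
  rw [show (2:ZMod 9) - 1 = 1 from by decide, show (2:ZMod 9) + 1 = 3 from by decide] at h2
  rw [show (3:ZMod 9) - 1 = 2 from by decide, show (3:ZMod 9) + 1 = 4 from by decide] at h3
  rw [show (4:ZMod 9) - 1 = 3 from by decide, show (4:ZMod 9) + 1 = 5 from by decide] at h4
  rw [show (5:ZMod 9) - 1 = 4 from by decide, show (5:ZMod 9) + 1 = 6 from by decide] at h5
  rw [show (6:ZMod 9) - 1 = 5 from by decide, show (6:ZMod 9) + 1 = 7 from by decide] at h6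
  rw [show (7:ZMod 9) - 1 = 6 from by decide, show (7:ZMod 9) + 1 = 8 from by decide] at h7
  rw [show (8:ZMod 9) - 1 = 7 from by decide, show (8:ZMod 9) + 1 = 0 from by decide] at h8
  omega

lemma sum_zmod5 (g : ZMod 5 → ℕ) : ∑ i, g i = g 0 + g 1 + g 2 + g 3 + g 4 := by
  rw [show (Finset.univ : Finset (ZMod 5)) = {0, 1, 2, 3, 4} from by decide]
  rw [Finset.sum_insert (by decide), Finset.sum_insert (by decide),
    Finset.sum_insert (by decide), Finset.sum_insert (by decide), Finset.sum_singleton]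
  ring

lemma sum_zmod9 (g : ZMod 9 → ℕ) :
    ∑ i, g i = g 0 + g 1 + g 2 + g 3 + g 4 + g 5 + g 6 + g 7 + g 8 := by
  rw [show (Finset.univ : Finset (ZMod 9)) = {0, 1, 2, 3, 4, 5, 6, 7, 8} from by decide]
  rw [Finset.sum_insert (by decide), Finset.sum_insert (by decide),
    Finset.sum_insert (by decide), Finset.sum_insert (by decide),
    Finset.sum_insert (by decide), Finset.sum_insert (by decide),
    Finset.sum_insert (by decide), Finset.sum_insert (by decide), Finset.sum_singleton]
  ring
lemma col_ne (N : ℕ) (c : ColT N) : predC c ≠ c ∧ succC c ≠ c ∧ predC c ≠ succC c := by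
  have h5 : ∀ i : ZMod 5, i - 1 ≠ i ∧ i + 1 ≠ i ∧ i - 1 ≠ i + 1 := by decide
  have h9 : ∀ i : ZMod 9, i - 1 ≠ i ∧ i + 1 ≠ i ∧ i - 1 ≠ i + 1 := by decide
  rcases c with i | ⟨a, k⟩
  · refine ⟨fun h => ?_, fun h => ?_, fun h => ?_⟩ <;>
      simp only [predC, succC, Sum.map_inl, Sum.inl.injEq] at h
    · exact (h5 i).1 h
    · exact (h5 i).2.1 h
    · exact (h5 i).2.2 h
  · refine ⟨fun h => ?_, fun h => ?_, fun h => ?_⟩ <;>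
      simp only [predC, succC, Sum.map_inr, Sum.inr.injEq, Prod.mk.injEq] at h
    · exact (h9 k).1 h.2
    · exact (h9 k).2.1 h.2
    · exact (h9 k).2.2 h.2

lemma fiber_card_le {N m : ℕ} (s : Set ((ZMod 5 × Fin m) ⊕ (Fin N × ZMod 9 × Fin m)))
    (c : ColT N) : (s ∩ colF ⁻¹' {c}).ncard ≤ m := by
  have hle : (s ∩ colF ⁻¹' {c}).ncard ≤ (Set.univ : Set (Fin m)).ncard := by
    apply Set.ncard_le_ncard_of_injOn (Sum.elim (fun a => a.2) (fun a => a.2.2))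
    · exact fun a _ => trivial
    · rintro a ⟨_, ha⟩ b ⟨_, hb⟩ hab
      simp only [Set.mem_preimage, Set.mem_singleton_iff] at ha hb
      rw [← hb] at ha
      rcases a with ⟨i, x⟩ | ⟨q, k, x⟩ <;> rcases b with ⟨j, y⟩ | ⟨r, l, y⟩ <;>
        simp only [colF, Sum.map_inl, Sum.map_inr, Sum.inl.injEq, Sum.inr.injEq,
          Sum.elim_inl, Sum.elim_inr, Prod.mk.injEq, reduceCtorEq] at ha hab ⊢
      all_goals first
        | exact ⟨ha, hab⟩
        | exact ⟨ha.1, ha.2, hab⟩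
  simpa [Set.ncard_univ] using hle

lemma deg_eq {N m : ℕ} (s : Set ((ZMod 5 × Fin m) ⊕ (Fin N × ZMod 9 × Fin m))) (d : ℕ)
    (hreg : ∀ v ∈ s,
      (s ∩ {w | (sumGraph (lexCycle 5 m) (copies N (lexCycle 9 m))).Adj v w}).ncard = d)
    (c : ColT N) (hc : 0 < (s ∩ colF ⁻¹' {c}).ncard) :
    (s ∩ colF ⁻¹' {predC c}).ncard + (s ∩ colF ⁻¹' {c}).ncard +
      (s ∩ colF ⁻¹' {succC c}).ncard = d + 1 := by
  obtain ⟨v, hvs, hvc⟩ : ∃ v, v ∈ s ∧ colF v = c := by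
    obtain ⟨v, hv⟩ := Set.nonempty_of_ncard_ne_zero (by omega : (s ∩ colF ⁻¹' {c}).ncard ≠ 0)
    exact ⟨v, hv.1, hv.2⟩
  have hd := hreg v hvs
  have hset : s ∩ {w | (sumGraph (lexCycle 5 m) (copies N (lexCycle 9 m))).Adj v w} =
      ((s ∩ colF ⁻¹' {predC c}) ∪ (s ∩ colF ⁻¹' {c}) ∪ (s ∩ colF ⁻¹' {succC c})) \ {v} := by
    ext w
    simp only [Set.mem_inter_iff, Set.mem_setOf_eq, adj_iff, hvc, Set.mem_diff,
      Set.mem_union, Set.mem_preimage, Set.mem_singleton_iff, ne_eq]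
    tauto
  have hne := col_ne N c
  have hdisj : ∀ c1 c2 : ColT N, c1 ≠ c2 →
      Disjoint (s ∩ colF ⁻¹' {c1}) (s ∩ colF ⁻¹' {c2}) := by
    intro c1 c2 h12
    rw [Set.disjoint_left]
    rintro w ⟨_, h1⟩ ⟨_, h2⟩
    simp only [Set.mem_preimage, Set.mem_singleton_iff] at h1 h2
    exact h12 (h1.symm.trans h2)
  have hvmem : v ∈ (s ∩ colF ⁻¹' {predC c}) ∪ (s ∩ colF ⁻¹' {c}) ∪ (s ∩ colF ⁻¹' {succC c}) :=
    Or.inl (Or.inr ⟨hvs, by simp [hvc]⟩)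
  rw [hset, Set.ncard_diff_singleton_of_mem hvmem,
    ncard_union3 _ _ _ (hdisj _ _ hne.1) (hdisj _ _ (fun h => hne.2.2 h))
      (hdisj _ _ (fun h => hne.2.1 h.symm))] at hd
  omega

theorem case_p_eq_seven_mod_twelve (p t : ℕ) (hp : p.Prime)
    (hpt : p = 12 * t + 7) :
    8 * Fintype.card ((ZMod 5 × Fin (6 * t + 3)) ⊕
        (Fin (3 * t + 1) × ZMod 9 × Fin (6 * t + 3))) = (p - 1) * (9 * p - 7) ∧
    ¬ HasRegEq (sumGraph (lexCycle 5 (6 * t + 3))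
        (copies (3 * t + 1) (lexCycle 9 (6 * t + 3)))) p := by
  constructor
  · have e1 : p - 1 = 12 * t + 6 := by omega
    have e2 : 9 * p - 7 = 108 * t + 56 := by omega
    rw [e1, e2]
    simp only [Fintype.card_sum, Fintype.card_prod, ZMod.card, Fintype.card_fin]
    ring
  · rintro ⟨s, hcard, d, hreg⟩
    have hcap := fun c => fiber_card_le (N := 3*t+1) (m := 6*t+3) s c
    have hdeg := deg_eq s d hreg
    set f5 : ZMod 5 → ℕ := fun i => (s ∩ colF ⁻¹' {Sum.inl i}).ncard with hf5
    set f9 : Fin (3*t+1) → ZMod 9 → ℕ :=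
      fun j k => (s ∩ colF ⁻¹' {Sum.inr (j, k)}).ncard with hf9
    have htot : (∑ i, f5 i) + ∑ j, (∑ k, f9 j k) = p := by
      rw [← hcard, ← sum_ncard_fibers (colF (N := 3*t+1) (m := 6*t+3)) s,
        Fintype.sum_sum_type, Fintype.sum_prod_type]
    have hyp5 : ∀ i : ZMod 5, 0 < f5 i → f5 (i - 1) + f5 i + f5 (i + 1) = d + 1 :=
      fun i hi => hdeg (Sum.inl i) hi
    have hyp9 : ∀ j, ∀ k : ZMod 9, 0 < f9 j k →
        f9 j (k - 1) + f9 j k + f9 j (k + 1) = d + 1 :=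
      fun j k hk => hdeg (Sum.inr (j, k)) hk
    have hk : ∀ j, ∃ kk : ℕ, kk ≤ 4 ∧ (∑ k, f9 j k) = kk * (d + 1) ∧
        (kk = 1 → d + 1 ≤ 2 * (6*t+3)) := by
      intro j
      have h9 := cyc9 (6*t+3) (d+1) (f9 j) (fun k => hcap (Sum.inr (j, k))) (hyp9 j)
      rw [← sum_zmod9 (f9 j)] at h9
      rcases h9 with h | h | h | h | h
      · exact ⟨0, by omega, by omega, by omega⟩
      · exact ⟨1, by omega, by omega, fun _ => h.2⟩
      · exact ⟨2, by omega, by omega, by omega⟩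
      · exact ⟨3, by omega, by omega, by omega⟩
      · exact ⟨4, by omega, by omega, by omega⟩
    choose kk hk1 hk2 hk3 using hk
    set K := ∑ j, kk j with hK
    have hsum9 : ∑ j, (∑ k, f9 j k) = K * (d + 1) := by
      rw [hK, Finset.sum_mul]
      exact Finset.sum_congr rfl (fun j _ => hk2 j)
    have hKle : K ≤ 4 * (3*t+1) := by
      calc K ≤ ∑ _j : Fin (3*t+1), 4 := Finset.sum_le_sum (fun j _ => hk1 j)
      _ = 4 * (3*t+1) := by simp [Finset.sum_const, mul_comm]
    have h5 := cyc5 (6*t+3) (d+1) f5 (fun i => hcap (Sum.inl i)) hyp5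
    rw [← sum_zmod5 f5] at h5
    set T5 := ∑ i, f5 i with hT5
    rw [hsum9] at htot
    set D := d + 1 with hDdef
    have hDpos : 0 < D := Nat.succ_pos d
    have hppos : 0 < p := hp.pos
    have hcase : (∃ k0, k0 ≤ 2 ∧ T5 = k0 * D ∧ (k0 = 1 → D ≤ 2*(6*t+3))) ∨
        3 * T5 = 5 * D := by
      rcases h5 with h | h | h | h
      · exact Or.inl ⟨0, by omega, by omega, by omega⟩
      · exact Or.inl ⟨1, by omega, by omega, fun _ => h.2⟩
      · exact Or.inl ⟨2, by omega, by omega, by omega⟩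
      · exact Or.inr h
    rcases hcase with ⟨k0, hk0le, hk0eq, hk0one⟩ | h35
    · have hpM : p = (k0 + K) * D := by rw [← htot, hk0eq]; ring
      have hdvd : D ∣ p := ⟨k0 + K, by rw [hpM]; ring⟩
      rcases (hp.eq_one_or_self_of_dvd D hdvd) with hD1 | hDp
      · rw [hD1, mul_one] at hpM
        omega
      · have hM1 : k0 + K = 1 := by
          rcases Nat.eq_zero_or_pos (k0 + K) with h0 | hpos
          · rw [h0, zero_mul] at hpM; omega
          · by_contra hne
            have h2 : 2 ≤ k0 + K := by omega
            have hge : 2 * p ≤ (k0 + K) * D := by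
              rw [hDp]; exact Nat.mul_le_mul h2 le_rfl
            omega
        rcases (by omega : (k0 = 1 ∧ K = 0) ∨ (k0 = 0 ∧ K = 1)) with ⟨h1, _⟩ | ⟨_, hK1⟩
        · have := hk0one h1; omega
        · obtain ⟨j, hj⟩ : ∃ j, kk j ≠ 0 := by
            by_contra hcn
            push_neg at hcn
            have hz : K = 0 := by
              rw [hK]; exact Finset.sum_eq_zero (fun j _ => hcn j)
            omega
          have hjle : kk j ≤ K := by
            rw [hK]
            exact Finset.single_le_sum (f := kk) (fun i _ => Nat.zero_le _) (Finset.mem_univ j)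
          have := hk3 j (by omega)
          omega
    · obtain ⟨Q, hQ⟩ : ∃ Q, Q = K * D := ⟨_, rfl⟩
      rw [← hQ] at htot
      have h3p : 3 * p = D * (5 + 3 * K) := by
        have h' : 3 * p = 5 * D + 3 * Q := by omega
        rw [h', hQ]; ring
      by_cases hpd : p ∣ D
      · have hDge : p ≤ D := Nat.le_of_dvd hDpos hpd
        omega
      · have hcop : Nat.Coprime D p := ((Nat.Prime.coprime_iff_not_dvd hp).mpr hpd).symm
        have hdvd3p : D ∣ 3 * p := ⟨5 + 3 * K, h3p⟩
        have hdvd3 : D ∣ 3 := hcop.dvd_of_dvd_mul_right hdvd3p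
        have hD3 : D = 1 ∨ D = 2 ∨ D = 3 := by
          have := Nat.le_of_dvd (by norm_num) hdvd3
          omega
        rcases hD3 with h | h | h
        · omega
        · rw [h] at hdvd3; omega
        · have h3Q : 3 ∣ Q := ⟨K, by rw [hQ, h]; ring⟩
          omega
end

section
/- N_=(3) = 6 and N_≥(3) = 5: every graph on 6 vertices contains a regular induced subgraph of order exactly 3, and there is a graph on 5 vertices with none; every graph on 5 vertices contains a regular induced subgraph of order at least 3, and there is a graph on 4 vertices with none. -/
/-- `G` has a regular induced subgraph of order at least `k`. -/
def HasRegGe {V : Type*} (G : SimpleGraph V) (k : ℕ) : Prop :=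
  ∃ s : Set V, k ≤ s.ncard ∧ RegOn G s

/-- The least `n` such that every graph on `n` vertices has a regular induced subgraph
of order exactly `k`. -/
noncomputable def Neq (k : ℕ) : ℕ :=
  sInf {n | ∀ G : SimpleGraph (Fin n), HasRegEq G k}

/-- The least `n` such that every graph on `n` vertices has a regular induced subgraph
of order at least `k`. -/
noncomputable def Nge (k : ℕ) : ℕ :=
  sInf {n | ∀ G : SimpleGraph (Fin n), HasRegGe G k}

/-!
With at least six vertices, a vertex has three neighbours or three non-neighbours, and the usual
argument for the Ramsey number `R(3, 3) = 6` yields a triangle or an independent triple; both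
induce regular subgraphs. On five vertices that argument only fails when every vertex has exactly
two neighbours and two non-neighbours, so the whole graph is `2`-regular. The `5`-cycle and the
path on four vertices, checked exhaustively, show both bounds are sharp. Since a graph inherits
regular induced subgraphs from its induced subgraphs, one counterexample on `n` vertices rules out
every smaller order too.
-/

open Finset SimpleGraph

variable {V W : Type*}

theorem SimpleGraph.IsClique.regOn {G : SimpleGraph V} {s : Set V} (hs : G.IsClique s) :
    RegOn G s := by
  refine ⟨s.ncard - 1, fun v hv => ?_⟩
  have : s ∩ {w | G.Adj v w} = s \ {v} := by
    ext w
    simp only [Set.mem_inter_iff, Set.mem_ofPred_eq, Set.mem_sdiff, Set.mem_singleton_iff]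
    exact ⟨fun h => ⟨h.1, h.2.ne'⟩, fun h => ⟨h.1, hs hv h.1 (Ne.symm h.2)⟩⟩
  rw [this, Set.ncard_sdiff_singleton_of_mem hv]

theorem SimpleGraph.IsIndepSet.regOn {G : SimpleGraph V} {s : Set V} (hs : G.IsIndepSet s) :
    RegOn G s := by
  refine ⟨0, fun v hv => ?_⟩
  have : s ∩ {w | G.Adj v w} = ∅ := by
    ext w
    simp only [Set.mem_inter_iff, Set.mem_ofPred_eq, Set.mem_empty_iff_false, iff_false, not_and]
    exact fun hw hvw => hs hv hw hvw.ne hvw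
  rw [this, Set.ncard_empty]

theorem SimpleGraph.IsNClique.hasRegEq {G : SimpleGraph V} {k : ℕ} {t : Finset V}
    (ht : G.IsNClique k t) : HasRegEq G k :=
  ⟨t, by rw [Set.ncard_coe_finset, ht.card_eq], ht.isClique.regOn⟩

theorem SimpleGraph.IsNIndepSet.hasRegEq {G : SimpleGraph V} {k : ℕ} {t : Finset V}
    (ht : G.IsNIndepSet k t) : HasRegEq G k :=
  ⟨t, by rw [Set.ncard_coe_finset, ht.card_eq], ht.isIndepSet.regOn⟩

theorem HasRegEq.hasRegGe {G : SimpleGraph V} {k : ℕ} (h : HasRegEq G k) : HasRegGe G k :=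
  let ⟨s, hs, hreg⟩ := h
  ⟨s, hs.ge, hreg⟩

theorem SimpleGraph.IsRegularOfDegree.regOn_univ [Fintype V] {G : SimpleGraph V}
    [DecidableRel G.Adj] {d : ℕ} (hG : G.IsRegularOfDegree d) : RegOn G Set.univ :=
  ⟨d, fun v _ => by
    rw [Set.univ_inter, ← hG v, ← card_neighborSet_eq_degree, ← Nat.card_eq_fintype_card]
    rfl⟩

theorem RegOn.image_of_comap {G : SimpleGraph W} (f : V ↪ W) {s : Set V}
    (hs : RegOn (G.comap f) s) : RegOn G (f '' s) := by
  obtain ⟨d, hd⟩ := hs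
  refine ⟨d, ?_⟩
  rintro _ ⟨v, hv, rfl⟩
  rw [← Set.image_inter_preimage, Set.ncard_image_of_injective _ f.injective]
  exact hd v hv

theorem HasRegEq.of_comap {G : SimpleGraph W} (f : V ↪ W) {k : ℕ}
    (h : HasRegEq (G.comap f) k) : HasRegEq G k :=
  let ⟨s, hs, hreg⟩ := h
  ⟨f '' s, by rwa [Set.ncard_image_of_injective _ f.injective], hreg.image_of_comap f⟩

theorem HasRegGe.of_comap {G : SimpleGraph W} (f : V ↪ W) {k : ℕ}
    (h : HasRegGe (G.comap f) k) : HasRegGe G k :=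
  let ⟨s, hs, hreg⟩ := h
  ⟨f '' s, by rwa [Set.ncard_image_of_injective _ f.injective], hreg.image_of_comap f⟩

theorem exists_isNIndepSet_three_of_cliqueFree [Fintype V] {G : SimpleGraph V}
    [DecidableRel G.Adj] (hG : G.CliqueFree 3) {v : V}
    (hv : 3 ≤ G.degree v) : ∃ t, G.IsNIndepSet 3 t := by
  obtain ⟨t, hts, ht⟩ := exists_subset_card_eq hv
  refine ⟨t, (isIndepSet_neighborSet_of_triangleFree G hG v).mono fun w hw => ?_, ht⟩
  simpa using hts hw

theorem degree_le_two_of_not_hasRegEq_three [Fintype V] [DecidableEq V] {G : SimpleGraph V}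
    [DecidableRel G.Adj] (h : ¬ HasRegEq G 3) (v : V) :
    G.degree v ≤ 2 ∧ Gᶜ.degree v ≤ 2 := by
  have hG : G.CliqueFree 3 := fun t ht => h ht.hasRegEq
  have hGc : Gᶜ.CliqueFree 3 := fun t ht => h (G.isNClique_compl.mp ht).hasRegEq
  constructor
  · by_contra! hv
    obtain ⟨t, ht⟩ := exists_isNIndepSet_three_of_cliqueFree hG hv
    exact hGc t (G.isNClique_compl.mpr ht)
  · by_contra! hv
    obtain ⟨t, ht⟩ := exists_isNIndepSet_three_of_cliqueFree hGc hv
    exact hG t (G.isNIndepSet_compl.mp ht)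

theorem hasRegEq_three_of_six_le_card [Fintype V] (G : SimpleGraph V)
    (hV : 6 ≤ Fintype.card V) : HasRegEq G 3 := by
  classical
  by_contra h
  obtain ⟨v⟩ : Nonempty V := Fintype.card_pos_iff.mp (by omega)
  obtain ⟨hd, hdc⟩ := degree_le_two_of_not_hasRegEq_three h v
  rw [degree_compl] at hdc
  omega

theorem hasRegGe_three_of_five_le_card [Fintype V] (G : SimpleGraph V)
    (hV : 5 ≤ Fintype.card V) : HasRegGe G 3 := by
  classical
  by_cases h : HasRegEq G 3
  · exact h.hasRegGe
  have hreg : G.IsRegularOfDegree 2 := fun v => by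
    obtain ⟨hd, hdc⟩ := degree_le_two_of_not_hasRegEq_three h v
    rw [degree_compl] at hdc
    omega
  exact ⟨Set.univ, by rw [Set.ncard_univ, Nat.card_eq_fintype_card]; omega, hreg.regOn_univ⟩

theorem regOn_coe_iff [DecidableEq V] (G : SimpleGraph V) [DecidableRel G.Adj] (t : Finset V) :
    RegOn G t ↔ ∀ v ∈ t, ∀ w ∈ t, #{u ∈ t | G.Adj v u} = #{u ∈ t | G.Adj w u} := by
  have hcard : ∀ v, ((t : Set V) ∩ {w | G.Adj v w}).ncard = #{u ∈ t | G.Adj v u} := by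
    intro v
    rw [← Set.ncard_coe_finset, coe_filter]
    rfl
  simp only [RegOn, hcard]
  constructor
  · rintro ⟨d, hd⟩ v hv w hw
    rw [hd v hv, hd w hw]
  · intro h
    rcases t.eq_empty_or_nonempty with rfl | ⟨w, hw⟩
    · exact ⟨0, by simp⟩
    · exact ⟨_, fun v hv => h v hv w hw⟩

theorem hasRegEq_iff [Finite V] (G : SimpleGraph V) (k : ℕ) :
    HasRegEq G k ↔ ∃ t : Finset V, #t = k ∧ RegOn G t := by
  refine ⟨fun ⟨s, hs, hreg⟩ => ?_, fun ⟨t, ht, hreg⟩ => ⟨t, by rwa [Set.ncard_coe_finset], hreg⟩⟩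
  obtain ⟨t, rfl⟩ := s.toFinite.exists_finset_coe
  exact ⟨t, by rwa [Set.ncard_coe_finset] at hs, hreg⟩

theorem hasRegGe_iff [Finite V] (G : SimpleGraph V) (k : ℕ) :
    HasRegGe G k ↔ ∃ t : Finset V, k ≤ #t ∧ RegOn G t := by
  refine ⟨fun ⟨s, hs, hreg⟩ => ?_, fun ⟨t, ht, hreg⟩ => ⟨t, by rwa [Set.ncard_coe_finset], hreg⟩⟩
  obtain ⟨t, rfl⟩ := s.toFinite.exists_finset_coe
  exact ⟨t, by rwa [Set.ncard_coe_finset] at hs, hreg⟩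

theorem not_hasRegEq_cycleGraph_five : ¬ HasRegEq (cycleGraph 5) 3 := by
  simp only [hasRegEq_iff, regOn_coe_iff]
  decide

instance (n : ℕ) : DecidableRel (pathGraph n).Adj :=
  fun _ _ => decidable_of_iff' _ pathGraph_adj

theorem not_hasRegGe_pathGraph_four : ¬ HasRegGe (pathGraph 4) 3 := by
  simp only [hasRegGe_iff, regOn_coe_iff]
  decide

theorem Neq_eq_add_one {k n : ℕ} (h : ∀ G : SimpleGraph (Fin (n + 1)), HasRegEq G k)
    (h' : ∃ G : SimpleGraph (Fin n), ¬ HasRegEq G k) : Neq k = n + 1 := by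
  refine le_antisymm (Nat.sInf_le h) (le_csInf ⟨n + 1, h⟩ fun m hm => ?_)
  by_contra! hmn
  obtain ⟨G, hG⟩ := h'
  exact hG (.of_comap (Fin.castLEEmb (by omega)) (hm _))

theorem Nge_eq_add_one {k n : ℕ} (h : ∀ G : SimpleGraph (Fin (n + 1)), HasRegGe G k)
    (h' : ∃ G : SimpleGraph (Fin n), ¬ HasRegGe G k) : Nge k = n + 1 := by
  refine le_antisymm (Nat.sInf_le h) (le_csInf ⟨n + 1, h⟩ fun m hm => ?_)
  by_contra! hmn
  obtain ⟨G, hG⟩ := h'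
  exact hG (.of_comap (Fin.castLEEmb (by omega)) (hm _))

theorem Neq_three_and_Nge_three :
    (∀ G : SimpleGraph (Fin 6), HasRegEq G 3) ∧
    (∃ G : SimpleGraph (Fin 5), ¬ HasRegEq G 3) ∧
    (∀ G : SimpleGraph (Fin 5), HasRegGe G 3) ∧
    (∃ G : SimpleGraph (Fin 4), ¬ HasRegGe G 3) ∧
    Neq 3 = 6 ∧ Nge 3 = 5 := by
  have h6 : ∀ G : SimpleGraph (Fin 6), HasRegEq G 3 :=
    fun G => hasRegEq_three_of_six_le_card G (by simp)
  have h5 : ∀ G : SimpleGraph (Fin 5), HasRegGe G 3 :=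
    fun G => hasRegGe_three_of_five_le_card G (by simp)
  have c5 : ∃ G : SimpleGraph (Fin 5), ¬ HasRegEq G 3 :=
    ⟨cycleGraph 5, not_hasRegEq_cycleGraph_five⟩
  have p4 : ∃ G : SimpleGraph (Fin 4), ¬ HasRegGe G 3 :=
    ⟨pathGraph 4, not_hasRegGe_pathGraph_four⟩
  exact ⟨h6, c5, h5, p4, Neq_eq_add_one h6 c5, Nge_eq_add_one h5 p4⟩
end
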